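/- arXiv:1301.1884 — 4 statements merged into one kernel-verified Lean document; each statement's English description precedes it below -/
import Mathlib

section
/- If a locally compact second countable group G admits a weak Følner sequence, then G admits a strong Følner sequence. -/
/-!
Thicken a weak Følner set `F` by a compact neighbourhood `C` of `1`. If `K ⊆ ⋃ k ∈ t, C k` for a
finite `t`, then a point of `∂_K (C F)` lies either in `K⁻¹ C F \ F` or in `F \ k⁻¹ F` for some
`k ∈ t`, so `|∂_K (C F)| / |F|` is controlled by finitely many weak Følner ratios, and
`|C F| ≥ |F|`. A diagonal choice along a compact exhaustion `K₁ ⊆ K₂ ⊆ ⋯` of `G` then handles all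
compact sets at once.
-/

open MeasureTheory Filter Set Topology Pointwise
open scoped ENNReal

section Group

variable {G : Type*} [Group G]

def folnerBoundary (K A : Set G) : Set G := (K⁻¹ * A) ∩ (K⁻¹ * Aᶜ)

lemma folnerBoundary_mono_left {K L : Set G} (h : K ⊆ L) (A : Set G) :
    folnerBoundary K A ⊆ folnerBoundary L A := by
  unfold folnerBoundary
  gcongr <;> exact inv_subset_inv.mpr h

lemma folnerBoundary_mul_subset {C K : Set G} {t : Finset G} (hK : K ⊆ ⋃ k ∈ t, C * {k})
    (F : Set G) :
    folnerBoundary K (C * F) ⊆ symmDiff F (K⁻¹ * C * F) ∪ ⋃ k ∈ t, symmDiff F ({k⁻¹} * F) := by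
  rintro x ⟨hxKCF, hx⟩
  obtain ⟨a, ha, b, hb, rfl⟩ := mem_mul.mp hx
  by_cases hxF : a * b ∈ F
  · obtain ⟨k, hk, hak⟩ : ∃ k ∈ t, a⁻¹ * k⁻¹ ∈ C := by
      simpa [mul_singleton] using hK ha
    refine Or.inr (mem_biUnion hk (Or.inl ⟨hxF, ?_⟩))
    intro hkF
    obtain ⟨_, rfl, f, hf, hkf⟩ := mem_mul.mp hkF
    refine hb (mem_mul.mpr ⟨a⁻¹ * k⁻¹, hak, f, hf, ?_⟩)
    rw [mul_assoc, hkf, inv_mul_cancel_left]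
  · exact Or.inl (Or.inr ⟨by rwa [mul_assoc], hxF⟩)

end Group

lemma ENNReal.exists_tendsto_diagonal {f : ℕ → ℕ → ℝ≥0∞} (hf : ∀ m, Tendsto (f m) atTop (𝓝 0)) :
    ∃ n : ℕ → ℕ, Tendsto (fun m => f m (n m)) atTop (𝓝 0) := by
  have hsmall : ∀ m, ∃ n, f m n ≤ (m : ℝ≥0∞)⁻¹ := fun m =>
    (ENNReal.tendsto_nhds_zero.mp (hf m) _ (ENNReal.inv_pos.mpr (ENNReal.natCast_ne_top m))).exists
  choose n hn using hsmall
  exact ⟨n, tendsto_of_tendsto_of_tendsto_of_le_of_le tendsto_const_nhds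
    ENNReal.tendsto_inv_nat_nhds_zero (fun _ => zero_le) hn⟩

lemma exists_isCompact_tendsto_folnerBoundary_mul {G : Type*} [Group G] [TopologicalSpace G]
    [IsTopologicalGroup G] [WeaklyLocallyCompactSpace G] [MeasurableSpace G] (μ : Measure G)
    {F : ℕ → Set G}
    (hF : ∀ K : Set G, IsCompact K →
      Tendsto (fun n => μ (symmDiff (F n) (K * F n)) / μ (F n)) atTop (𝓝 0))
    {K : Set G} (hK : IsCompact K) :
    ∃ C : Set G, IsCompact C ∧ (1 : G) ∈ C ∧
      Tendsto (fun n => μ (folnerBoundary K (C * F n)) / μ (F n)) atTop (𝓝 0) := by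
  obtain ⟨C, hC, hC1⟩ := exists_compact_mem_nhds (1 : G)
  obtain ⟨t, -, hKt⟩ := hK.elim_nhds_subcover (fun k => C * {k})
    fun k _ => mul_singleton_mem_nhds_of_nhds_one k hC1
  refine ⟨C, hC, mem_of_mem_nhds hC1, ?_⟩
  have hbound : ∀ n, μ (folnerBoundary K (C * F n)) / μ (F n) ≤
      μ (symmDiff (F n) (K⁻¹ * C * F n)) / μ (F n) +
        ∑ k ∈ t, μ (symmDiff (F n) ({k⁻¹} * F n)) / μ (F n) := fun n =>
    calc μ (folnerBoundary K (C * F n)) / μ (F n)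
        ≤ (μ (symmDiff (F n) (K⁻¹ * C * F n)) +
            ∑ k ∈ t, μ (symmDiff (F n) ({k⁻¹} * F n))) / μ (F n) := by
          gcongr
          refine (measure_mono (folnerBoundary_mul_subset hKt (F n))).trans ?_
          exact (measure_union_le _ _).trans (add_le_add le_rfl (measure_biUnion_finset_le _ _))
      _ = _ := by simp only [div_eq_mul_inv, add_mul, Finset.sum_mul]
  have hlim : Tendsto (fun n => μ (symmDiff (F n) (K⁻¹ * C * F n)) / μ (F n) +
      ∑ k ∈ t, μ (symmDiff (F n) ({k⁻¹} * F n)) / μ (F n)) atTop (𝓝 0) := by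
    simpa using (hF _ (hK.inv.mul hC)).add
      (tendsto_finsetSum t fun k _ => hF {k⁻¹} isCompact_singleton)
  exact tendsto_of_tendsto_of_tendsto_of_le_of_le tendsto_const_nhds hlim (fun _ => zero_le) hbound

theorem exists_strong_folner_of_weak_folner_general
    {G : Type*} [Group G] [TopologicalSpace G] [IsTopologicalGroup G]
    [LocallyCompactSpace G] [SecondCountableTopology G]
    [MeasurableSpace G]
    (μ : Measure G)
    (hweak : ∃ F : ℕ → Set G, (∀ n, IsCompact (F n)) ∧ (∀ n, 0 < μ (F n)) ∧
      ∀ K : Set G, IsCompact K →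
        Tendsto (fun n => μ (symmDiff (F n) (K * F n)) / μ (F n)) atTop (𝓝 0)) :
    ∃ F : ℕ → Set G, (∀ n, IsCompact (F n)) ∧ (∀ n, 0 < μ (F n)) ∧
      ∀ K : Set G, IsCompact K →
        Tendsto (fun n => μ ((K⁻¹ * F n) ∩ (K⁻¹ * (F n)ᶜ)) / μ (F n)) atTop (𝓝 0) := by
  obtain ⟨F, hFc, hFpos, hFweak⟩ := hweak
  let Q := CompactExhaustion.choice G
  choose C hCc hC1 hC using fun m =>
    exists_isCompact_tendsto_folnerBoundary_mul μ hFweak (Q.isCompact m)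
  obtain ⟨n, hn⟩ := ENNReal.exists_tendsto_diagonal hC
  have hF_sub : ∀ m, F (n m) ⊆ C m * F (n m) := fun m => subset_mul_right _ (hC1 m)
  refine ⟨fun m => C m * F (n m), fun m => (hCc m).mul (hFc _),
    fun m => (hFpos _).trans_le (measure_mono (hF_sub m)), fun K hK => ?_⟩
  obtain ⟨m₀, hKQ⟩ := Q.exists_superset_of_isCompact hK
  refine tendsto_of_tendsto_of_tendsto_of_le_of_le' tendsto_const_nhds hn
    (Eventually.of_forall fun _ => zero_le) ?_
  filter_upwards [eventually_ge_atTop m₀] with m hm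
  exact ENNReal.div_le_div
    (measure_mono (folnerBoundary_mono_left (hKQ.trans (Q.subset hm)) _)) (measure_mono (hF_sub m))

/-- If a locally compact second countable group admits a weak Følner
sequence, then it admits a strong Følner sequence. -/
theorem exists_strong_folner_of_weak_folner
    {G : Type*} [Group G] [TopologicalSpace G] [IsTopologicalGroup G]
    [LocallyCompactSpace G] [SecondCountableTopology G]
    [MeasurableSpace G] [BorelSpace G]
    (μ : Measure G) [μ.IsHaarMeasure]
    (hweak : ∃ F : ℕ → Set G, (∀ n, IsCompact (F n)) ∧ (∀ n, 0 < μ (F n)) ∧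
      ∀ K : Set G, IsCompact K →
        Tendsto (fun n => μ (symmDiff (F n) (K * F n)) / μ (F n)) atTop (𝓝 0)) :
    ∃ F : ℕ → Set G, (∀ n, IsCompact (F n)) ∧ (∀ n, 0 < μ (F n)) ∧
      ∀ K : Set G, IsCompact K →
        Tendsto (fun n => μ ((K⁻¹ * F n) ∩ (K⁻¹ * (F n)ᶜ)) / μ (F n)) atTop (𝓝 0) :=
  exists_strong_folner_of_weak_folner_general μ hweak
end

section
/- Every weak Følner sequence (F_n) in a locally compact second countable group admits a tempered subsequence: there is a subsequence (F_{n_k}) and a constant C such that |⋃_{i<k} F_{n_i}⁻¹ F_{n_k}| < C|F_{n_k}| for every k. -/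
open MeasureTheory Filter Set Topology Pointwise ENNReal
open scoped symmDiff

/-!
Put `K m = ⋃_{j ≤ m} F_j⁻¹`, a compact set. Weak Følner-ness makes `|F_N Δ K_m F_N| < |F_N|`,
hence `|K_m F_N| < 2|F_N|`, for all large `N`. Choosing each `n_{k+1}` large enough for
`m = n_k` gives a strictly increasing sequence with
`⋃_{i ≤ k} F_{n_i}⁻¹ F_{n_{k+1}} ⊆ K_{n_k} F_{n_{k+1}}`, so it is tempered with `C = 2`.
-/

theorem Filter.exists_strictMono_forall_rel_succ {P : ℕ → ℕ → Prop}
    (h : ∀ m, ∀ᶠ N in atTop, P m N) :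
    ∃ n : ℕ → ℕ, StrictMono n ∧ ∀ k, P (n k) (n (k + 1)) := by
  choose φ hφ using fun m => ((h m).and (eventually_gt_atTop m)).exists
  let n : ℕ → ℕ := fun k => Nat.rec 0 (fun _ m => φ m) k
  exact ⟨n, strictMono_nat_of_lt_succ fun k => (hφ (n k)).2, fun k => (hφ (n k)).1⟩

namespace MeasureTheory

variable {α : Type*} [MeasurableSpace α] {μ : Measure α}

theorem measure_le_add_measure_symmDiff (s t : Set α) : μ t ≤ μ s + μ (s ∆ t) := by
  rw [← tsub_le_iff_left, symmDiff_comm]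
  exact le_measure_symmDiff

theorem eventually_measure_lt_two_mul_of_tendsto_measure_symmDiff_div {ι : Type*}
    {l : Filter ι} {s t : ι → Set α} (hs : ∀ i, μ (s i) ≠ ∞) (hs₀ : ∀ i, μ (s i) ≠ 0)
    (h : Tendsto (fun i => μ (s i ∆ t i) / μ (s i)) l (𝓝 0)) :
    ∀ᶠ i in l, μ (t i) < 2 * μ (s i) := by
  filter_upwards [h.eventually_lt_const zero_lt_one] with i hi
  have hsymm : μ (s i ∆ t i) < μ (s i) := by
    simpa using (ENNReal.div_lt_iff (Or.inl (hs₀ i)) (Or.inl (hs i))).1 hi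
  calc μ (t i) ≤ μ (s i) + μ (s i ∆ t i) := measure_le_add_measure_symmDiff _ _
    _ < μ (s i) + μ (s i) := ENNReal.add_lt_add_left (hs i) hsymm
    _ = 2 * μ (s i) := (two_mul _).symm

end MeasureTheory

theorem Set.iUnion_lt_succ_mul_subset {M : Type*} [Mul M] (A : ℕ → Set M) {n : ℕ → ℕ}
    (hn : Monotone n) (k : ℕ) (B : Set M) :
    ⋃ i, ⋃ _ : i < k + 1, A (n i) * B ⊆ (⋃ j ≤ n k, A j) * B := by
  simp only [iUnion_subset_iff]
  intro i hi
  exact mul_subset_mul_right (subset_biUnion_of_mem (hn (Nat.le_of_lt_succ hi)))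

theorem weak_folner_has_tempered_subsequence_general
    {G : Type*} [Group G] [TopologicalSpace G] [IsTopologicalGroup G]
    [MeasurableSpace G]
    (μ : Measure G) [μ.IsHaarMeasure]
    (F : ℕ → Set G) (hFcomp : ∀ n, IsCompact (F n)) (hFpos : ∀ n, 0 < μ (F n))
    (hweak : ∀ K : Set G, IsCompact K →
      Tendsto (fun n => μ (symmDiff (F n) (K * F n)) / μ (F n)) atTop (𝓝 0)) :
    ∃ n : ℕ → ℕ, StrictMono n ∧ ∃ C : ℝ≥0∞, 0 < C ∧ C ≠ ⊤ ∧
      ∀ k : ℕ, μ (⋃ i, ⋃ _ : i < k, (F (n i))⁻¹ * F (n k)) < C * μ (F (n k)) := by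
  have hK : ∀ m, IsCompact (⋃ j ≤ m, (F j)⁻¹) := fun m =>
    (finite_le_nat m).isCompact_biUnion fun j _ => (hFcomp j).inv
  obtain ⟨n, hn, hstep⟩ := exists_strictMono_forall_rel_succ fun m =>
    eventually_measure_lt_two_mul_of_tendsto_measure_symmDiff_div
      (fun N => (hFcomp N).measure_lt_top.ne) (fun N => (hFpos N).ne') (hweak _ (hK m))
  refine ⟨n, hn, 2, two_pos, ofNat_ne_top, fun k => ?_⟩
  cases k with
  | zero => simpa using ENNReal.mul_pos two_ne_zero (hFpos _).ne'
  | succ k =>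
    exact (measure_mono (iUnion_lt_succ_mul_subset (fun j => (F j)⁻¹) hn.monotone k _)).trans_lt
      (hstep k)

/-- Every weak Følner sequence in a locally compact second countable group
admits a tempered subsequence: a strictly monotone `n : ℕ → ℕ` and a finite `C > 0` with
`|⋃_{i<k} (F (n i))⁻¹ F (n k)| < C |F (n k)|` for every `k`. -/
theorem weak_folner_has_tempered_subsequence
    {G : Type*} [Group G] [TopologicalSpace G] [IsTopologicalGroup G]
    [LocallyCompactSpace G] [SecondCountableTopology G]
    [MeasurableSpace G] [BorelSpace G]
    (μ : Measure G) [μ.IsHaarMeasure]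
    (F : ℕ → Set G) (hFcomp : ∀ n, IsCompact (F n)) (hFpos : ∀ n, 0 < μ (F n))
    (hweak : ∀ K : Set G, IsCompact K →
      Tendsto (fun n => μ (symmDiff (F n) (K * F n)) / μ (F n)) atTop (𝓝 0)) :
    ∃ n : ℕ → ℕ, StrictMono n ∧ ∃ C : ℝ≥0∞, 0 < C ∧ C ≠ ⊤ ∧
      ∀ k : ℕ, μ (⋃ i, ⋃ _ : i < k, (F (n i))⁻¹ * F (n k)) < C * μ (F (n k)) :=
  weak_folner_has_tempered_subsequence_general μ F hFcomp hFpos hweak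
end

section
/- Van der Corput–type consequence of condition (⊥): if c ∈ L∞(G) bounded by 1 satisfies (⊥), then for every K there exist increasing intervals [L_1,R_1], …, [L_K,R_K] of natural numbers and δ arbitrarily small such that for all j < k and all N ∈ [L_k, R_k], the set S_{δ,L_j,R_j}(c) has density at least 1 − δ in F_N (i.e., |S_{δ,L_j,R_j}(c) ∩ F_N| ≥ (1−δ)|F_N|), and |∂_{F_{(j)}}F_N| < δ|F_N| where F_{(j)} = ⋃_{N=L_j}^{R_j} F_N. -/
open MeasureTheory Filter Set Topology Pointwise ENNReal

/-- The correlation average `E_{g ∈ F n} c(g) c(ga)`. -/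
noncomputable def corrAvg {G : Type*} [Group G] [MeasurableSpace G]
    (μ : Measure G) (F : ℕ → Set G) (c : G → ℝ) (n : ℕ) (a : G) : ℝ :=
  (μ (F n)).toReal⁻¹ * ∫ g in F n, c g * c (g * a) ∂μ

/-- The set `S_{δ,L,R}(c) = {a : |E_{g ∈ F n} c(g) c(ga)| < δ for all L ≤ n ≤ R}`. -/
noncomputable def Sset {G : Type*} [Group G] [MeasurableSpace G]
    (μ : Measure G) (F : ℕ → Set G) (c : G → ℝ) (δ : ℝ) (L R : ℕ) : Set G :=
  {a : G | ∀ n, L ≤ n → n ≤ R → |corrAvg μ F c n a| < δ}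

/-!
Fix `δ`. By (⊥) there is `N₀` such that for every `l ≥ N₀` the set `S_{δ,l,l}(c)` has lower
density `> 1 - δ`, so it has density `≥ 1 - δ` in `F N` for all large `N`; and since `F l` is
compact, the strong Følner property makes `|∂_{F l} F N| < δ |F N|` for all large `N`. Thus
"`l` is good at `N`" holds eventually in `N` for each `l ≥ N₀`, and a diagonal extraction gives
`l₀ < l₁ < ⋯` with every `lⱼ` good at every later `lₖ`; the intervals are `[lₖ, lₖ]`.
-/

theorem Filter.exists_strictMono_forall_lt_of_eventually {r : ℕ → ℕ → Prop} {N₀ : ℕ}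
    (hr : ∀ m, N₀ ≤ m → ∀ᶠ n in atTop, r m n) :
    ∃ φ : ℕ → ℕ, StrictMono φ ∧ ∀ ⦃j k⦄, j < k → r (φ j) (φ k) := by
  obtain ⟨φ, hφ, hφr, -⟩ := hasAntitoneBasis_atTop.subbasis_with_rel
    (r := fun m n => N₀ ≤ m → r m n) fun m => eventually_imp_distrib_left.2 (hr m)
  -- shifting by `N₀` pushes every index past `N₀`, since `φ k ≥ k`
  refine ⟨fun k => φ (k + N₀), fun j k hjk => hφ (by omega), fun j k hjk => ?_⟩
  exact hφr (by omega) ((Nat.le_add_left N₀ j).trans (hφ.id_le _))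

theorem Filter.eventually_mul_lt_of_lt_liminf_div {ι : Type*} {l : Filter ι} {a b : ι → ℝ}
    {t : ℝ} (ha : ∀ i, 0 ≤ a i) (hb : ∀ i, 0 < b i) (ht : t < liminf (fun i => a i / b i) l) :
    ∀ᶠ i in l, t * b i < a i := by
  have hbdd : IsBoundedUnder (· ≥ ·) l fun i => a i / b i :=
    isBoundedUnder_of_eventually_ge (a := 0) (.of_forall fun i => div_nonneg (ha i) (hb i).le)
  filter_upwards [eventually_lt_of_lt_liminf ht hbdd] with i hi
  rwa [lt_div_iff₀ (hb i)] at hi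

theorem ENNReal.eventually_toReal_lt_mul_of_tendsto_div_zero {ι : Type*} {l : Filter ι}
    {x y : ι → ℝ≥0∞} (hy₀ : ∀ i, y i ≠ 0) (hy : ∀ i, y i ≠ ∞)
    (hxy : Tendsto (fun i => x i / y i) l (𝓝 0)) {δ : ℝ} (hδ : 0 < δ) :
    ∀ᶠ i in l, (x i).toReal < δ * (y i).toReal := by
  filter_upwards [hxy.eventually_lt_const (ENNReal.ofReal_pos.2 hδ)] with i hi
  rw [ENNReal.div_lt_iff (.inl (hy₀ i)) (.inl (hy i))] at hi
  have := ENNReal.toReal_strict_mono (ENNReal.mul_ne_top ENNReal.ofReal_ne_top (hy i)) hi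
  rwa [ENNReal.toReal_mul, ENNReal.toReal_ofReal hδ.le] at this

theorem perp_gives_good_intervals_general
    {G : Type*} [Group G] [TopologicalSpace G]
    [MeasurableSpace G]
    (μ : Measure G) [μ.IsHaarMeasure]
    (F : ℕ → Set G) (hFcomp : ∀ n, IsCompact (F n)) (hFpos : ∀ n, 0 < μ (F n))
    (hstrong : ∀ Kc : Set G, IsCompact Kc →
      Tendsto (fun n => μ ((Kc⁻¹ * F n) ∩ (Kc⁻¹ * (F n)ᶜ)) / μ (F n)) atTop (𝓝 0))
    (c : G → ℝ)
    (hperp : ∀ δ > (0:ℝ), ∃ N₀ : ℕ, ∀ L R : ℕ, N₀ ≤ L → L ≤ R →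
      1 - δ < liminf (fun N =>
        (μ (Sset μ F c δ L R ∩ F N)).toReal / (μ (F N)).toReal) atTop)
    (K : ℕ) :
    ∀ δ₀ > (0:ℝ), ∃ δ : ℝ, 0 < δ ∧ δ ≤ δ₀ ∧ ∃ L R : Fin K → ℕ,
      (∀ j, L j ≤ R j) ∧
      (∀ j k : Fin K, j < k → R j < L k) ∧
      ∀ j k : Fin K, j < k → ∀ N : ℕ, L k ≤ N → N ≤ R k →
        (1 - δ) * (μ (F N)).toReal ≤ (μ (Sset μ F c δ (L j) (R j) ∩ F N)).toReal ∧
        (μ (((⋃ m ∈ Icc (L j) (R j), F m)⁻¹ * F N) ∩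
            ((⋃ m ∈ Icc (L j) (R j), F m)⁻¹ * (F N)ᶜ))).toReal
          < δ * (μ (F N)).toReal := by
  intro δ hδ
  refine ⟨δ, hδ, le_rfl, ?_⟩
  have hfin : ∀ n, μ (F n) ≠ ∞ := fun n => (hFcomp n).measure_lt_top.ne
  obtain ⟨N₀, hN₀⟩ := hperp δ hδ
  have hgood : ∀ l, N₀ ≤ l → ∀ᶠ N in atTop,
      (1 - δ) * (μ (F N)).toReal ≤ (μ (Sset μ F c δ l l ∩ F N)).toReal ∧
      (μ (((⋃ m ∈ Icc l l, F m)⁻¹ * F N) ∩ ((⋃ m ∈ Icc l l, F m)⁻¹ * (F N)ᶜ))).toReal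
        < δ * (μ (F N)).toReal := by
    intro l hl
    have hcompact : IsCompact (⋃ m ∈ Icc l l, F m) :=
      (finite_Icc l l).isCompact_biUnion fun m _ => hFcomp m
    have hdensity := eventually_mul_lt_of_lt_liminf_div (fun N => ENNReal.toReal_nonneg)
      (fun N => ENNReal.toReal_pos (hFpos N).ne' (hfin N)) (hN₀ l l hl le_rfl)
    have hboundary := ENNReal.eventually_toReal_lt_mul_of_tendsto_div_zero
      (fun N => (hFpos N).ne') hfin (hstrong _ hcompact) hδ
    filter_upwards [hdensity, hboundary] with N h₁ h₂ using ⟨h₁.le, h₂⟩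
  obtain ⟨φ, hφ, hφgood⟩ := exists_strictMono_forall_lt_of_eventually hgood
  refine ⟨fun k => φ k, fun k => φ k, fun _ => le_rfl, fun j k hjk => hφ hjk, ?_⟩
  intro j k hjk N hL hR
  obtain rfl : N = φ k := le_antisymm hR hL
  exact hφgood hjk

/-- If `c ∈ L∞(G)` bounded by 1 satisfies condition (⊥) (w.r.t. a tempered
strong Følner sequence), then for every `K` there are increasing intervals
`[L 0, R 0], …, [L (K-1), R (K-1)]` and arbitrarily small `δ > 0` such that for all
`j < k` and all `N ∈ [L k, R k]`: `S_{δ, L j, R j}(c)` has density at least `1 − δ` in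
`F N`, and `|∂_{F_(j)} (F N)| < δ |F N|`, where `F_(j) = ⋃_{m = L j}^{R j} F m`. -/
theorem perp_gives_good_intervals
    {G : Type*} [Group G] [TopologicalSpace G] [IsTopologicalGroup G]
    [LocallyCompactSpace G] [SecondCountableTopology G]
    [MeasurableSpace G] [BorelSpace G]
    (μ : Measure G) [μ.IsHaarMeasure]
    (F : ℕ → Set G) (hFcomp : ∀ n, IsCompact (F n)) (hFpos : ∀ n, 0 < μ (F n))
    (hstrong : ∀ Kc : Set G, IsCompact Kc →
      Tendsto (fun n => μ ((Kc⁻¹ * F n) ∩ (Kc⁻¹ * (F n)ᶜ)) / μ (F n)) atTop (𝓝 0))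
    (C : ℝ≥0∞) (hC : C ≠ ⊤)
    (htemp : ∀ j : ℕ, μ (⋃ i, ⋃ _ : i < j, (F i)⁻¹ * F j) < C * μ (F j))
    (c : G → ℝ) (hcm : Measurable c) (hc1 : ∀ g, |c g| ≤ 1)
    (hperp : ∀ δ > (0:ℝ), ∃ N₀ : ℕ, ∀ L R : ℕ, N₀ ≤ L → L ≤ R →
      1 - δ < liminf (fun N =>
        (μ (Sset μ F c δ L R ∩ F N)).toReal / (μ (F N)).toReal) atTop)
    (K : ℕ) :
    ∀ δ₀ > (0:ℝ), ∃ δ : ℝ, 0 < δ ∧ δ ≤ δ₀ ∧ ∃ L R : Fin K → ℕ,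
      (∀ j, L j ≤ R j) ∧
      (∀ j k : Fin K, j < k → R j < L k) ∧
      ∀ j k : Fin K, j < k → ∀ N : ℕ, L k ≤ N → N ≤ R k →
        (1 - δ) * (μ (F N)).toReal ≤ (μ (Sset μ F c δ (L j) (R j) ∩ F N)).toReal ∧
        (μ (((⋃ m ∈ Icc (L j) (R j), F m)⁻¹ * F N) ∩
            ((⋃ m ∈ Icc (L j) (R j), F m)⁻¹ * (F N)ᶜ))).toReal
          < δ * (μ (F N)).toReal :=
  perp_gives_good_intervals_general μ F hFcomp hFpos hstrong c hperp K
end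

section
/- Let G be a locally compact second countable group with a tempered strong Følner sequence (F_n), let Ω be a compact group with Haar probability measure, χ: G → Ω a continuous homomorphism, and c ∈ L∞(G) bounded by 1 satisfying condition (⊥). If for almost every ω ∈ Ω (with respect to Haar measure) one has lim_N E_{g∈F_N} c(g)φ(χ(g)ω) = 0 for a fixed φ ∈ C(Ω), then the same limit holds for every ω ∈ Ω. -/
open MeasureTheory Filter Set Topology Pointwise ENNReal

theorem equicontinuous_swap_of_continuous_uncurry {X Y α : Type*} [TopologicalSpace X]
    [TopologicalSpace Y] [CompactSpace Y] [UniformSpace α] {f : X → Y → α}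
    (hf : Continuous (Function.uncurry f)) : Equicontinuous (Function.swap f) := by
  intro x₀ U hU
  obtain ⟨V, hV, hVU⟩ := isCompact_univ.mem_uniformity_of_prod (s := univ) hf.continuousOn
    (mem_univ x₀) (symm_le_uniformity hU)
  rw [nhdsWithin_univ] at hV
  filter_upwards [hV] with x hx y using hVU x hx y (mem_univ y)

theorem Equicontinuous.mul_left_of_norm_le {ι X R : Type*} [TopologicalSpace X]
    [SeminormedRing R] {F : ι → X → R} (hF : Equicontinuous F) {c : ι → R} {C : ℝ}
    (hc : ∀ i, ‖c i‖ ≤ C) : Equicontinuous fun i x => c i * F i x := by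
  intro x₀
  rw [Metric.equicontinuousAt_iff_right]
  intro ε hε
  have hC : 0 < max C 1 := lt_max_of_lt_right one_pos
  filter_upwards [Metric.equicontinuousAt_iff_right.1 (hF x₀) (ε / max C 1) (div_pos hε hC)]
    with x hx i
  calc dist (c i * F i x₀) (c i * F i x) = ‖c i * (F i x₀ - F i x)‖ := by
        rw [dist_eq_norm, mul_sub]
    _ ≤ max C 1 * dist (F i x₀) (F i x) := by
        rw [dist_eq_norm]
        exact (norm_mul_le _ _).trans
          (mul_le_mul_of_nonneg_right ((hc i).trans (le_max_left _ _)) (norm_nonneg _))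
    _ < ε := (lt_div_iff₀' hC).1 (hx i)

theorem Equicontinuous.integral_of_measure_univ_le_one {ι α X E : Type*} [MeasurableSpace α]
    [TopologicalSpace X] [NormedAddCommGroup E] [NormedSpace ℝ E]
    {ν : ι → Measure α} [∀ i, IsFiniteMeasure (ν i)] (hν : ∀ i, ν i univ ≤ 1)
    {F : α → X → E} (hF : Equicontinuous F) (hint : ∀ i x, Integrable (F · x) (ν i)) :
    Equicontinuous fun i x => ∫ a, F a x ∂ν i := by
  intro x₀
  rw [Metric.equicontinuousAt_iff_right]
  intro ε hε
  filter_upwards [Metric.equicontinuousAt_iff_right.1 (hF x₀) (ε / 2) (half_pos hε)] with x hx i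
  have hmass : (ν i).real univ ≤ 1 :=
    ENNReal.toReal_le_of_le_ofReal zero_le_one (by simpa using hν i)
  calc dist (∫ a, F a x₀ ∂ν i) (∫ a, F a x ∂ν i) = ‖∫ a, (F a x₀ - F a x) ∂ν i‖ := by
        rw [dist_eq_norm, integral_sub (hint i x₀) (hint i x)]
    _ ≤ ε / 2 * (ν i).real univ :=
        norm_integral_le_of_norm_le_const <|
          .of_forall fun a => (dist_eq_norm (F a x₀) (F a x) ▸ hx a).le
    _ ≤ ε / 2 := mul_le_of_le_one_right (half_pos hε).le hmass
    _ < ε := half_lt_self hε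

theorem Equicontinuous.average {ι α X E : Type*} [MeasurableSpace α]
    [TopologicalSpace X] [NormedAddCommGroup E] [NormedSpace ℝ E]
    {μ : ι → Measure α} {F : α → X → E} (hF : Equicontinuous F) {C : ℝ}
    (hbdd : ∀ a x, ‖F a x‖ ≤ C) (hmeas : ∀ i x, AEStronglyMeasurable (F · x) (μ i)) :
    Equicontinuous fun i x => ⨍ a, F a x ∂μ i :=
  hF.integral_of_measure_univ_le_one (ν := fun i => (μ i univ)⁻¹ • μ i)
    (fun _ => by simp)
    (fun i x => .of_bound ((hmeas i x).smul_measure _) C (Eventually.of_forall (hbdd · x)))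

theorem ae_to_everywhere_compact_group_general
    {G : Type*} [Group G] [TopologicalSpace G]
    [MeasurableSpace G] [BorelSpace G]
    (μ : Measure G)
    (F : ℕ → Set G)
    (c : G → ℝ) (hcm : Measurable c) (hc1 : ∀ g, |c g| ≤ 1)
    {Ω : Type*} [Group Ω] [TopologicalSpace Ω] [IsTopologicalGroup Ω]
    [CompactSpace Ω] [MeasurableSpace Ω]
    (P : Measure Ω) [P.IsHaarMeasure]
    (χ : G →* Ω) (hχ : Continuous χ)
    (φ : Ω → ℝ) (hφ : Continuous φ)
    (hae : ∀ᵐ ω ∂P,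
      Tendsto (fun N => (μ (F N)).toReal⁻¹ * ∫ g in F N, c g * φ (χ g * ω) ∂μ)
        atTop (𝓝 0)) :
    ∀ ω : Ω,
      Tendsto (fun N => (μ (F N)).toReal⁻¹ * ∫ g in F N, c g * φ (χ g * ω) ∂μ)
        atTop (𝓝 0) := by
  have htranslates : Equicontinuous fun y ω : Ω => φ (y * ω) :=
    equicontinuous_swap_of_continuous_uncurry (f := fun ω y => φ (y * ω)) (by fun_prop)
  have hbdd (g : G) (ω : Ω) : ‖c g * φ (χ g * ω)‖ ≤ ‖(⟨φ, hφ⟩ : C(Ω, ℝ))‖ :=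
    (norm_mul_le _ _).trans <| (mul_le_of_le_one_left (norm_nonneg _) (hc1 g)).trans
      (ContinuousMap.norm_coe_le_norm ⟨φ, hφ⟩ _)
  have hmeas (N : ℕ) (ω : Ω) :
      AEStronglyMeasurable (fun g => c g * φ (χ g * ω)) (μ.restrict (F N)) :=
    (hcm.mul (by fun_prop : Continuous fun g => φ (χ g * ω)).measurable).aestronglyMeasurable
  have hA : Equicontinuous fun N ω => (μ (F N)).toReal⁻¹ * ∫ g in F N, c g * φ (χ g * ω) ∂μ := by
    simpa only [setAverage_eq, measureReal_def, smul_eq_mul, Function.comp_apply] using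
      ((htranslates.comp χ).mul_left_of_norm_le hc1).average hbdd hmeas
  exact fun ω => (hA.isClosed_setOfPred_tendsto continuous_const).closure_subset
    (P.dense_of_ae hae ω)

/-- Let `(F n)` be a tempered strong Følner sequence in a lcsc group `G`,
`Ω` a compact group with Haar probability measure `P`, `χ : G → Ω` a continuous
homomorphism, `φ ∈ C(Ω)`, and `c ∈ L∞(G)` bounded by 1 satisfying condition (⊥).
If `lim_N E_{g ∈ F N} c(g) φ(χ(g) ω) = 0` for `P`-a.e. `ω`, then the same limit holds
for every `ω ∈ Ω`. -/
theorem ae_to_everywhere_compact_group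
    {G : Type*} [Group G] [TopologicalSpace G] [IsTopologicalGroup G]
    [LocallyCompactSpace G] [SecondCountableTopology G]
    [MeasurableSpace G] [BorelSpace G]
    (μ : Measure G) [μ.IsHaarMeasure]
    (F : ℕ → Set G) (hFcomp : ∀ n, IsCompact (F n)) (hFpos : ∀ n, 0 < μ (F n))
    (hstrong : ∀ Kc : Set G, IsCompact Kc →
      Tendsto (fun n => μ ((Kc⁻¹ * F n) ∩ (Kc⁻¹ * (F n)ᶜ)) / μ (F n)) atTop (𝓝 0))
    (C : ℝ≥0∞) (hC : C ≠ ⊤)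
    (htemp : ∀ j : ℕ, μ (⋃ i, ⋃ _ : i < j, (F i)⁻¹ * F j) < C * μ (F j))
    (c : G → ℝ) (hcm : Measurable c) (hc1 : ∀ g, |c g| ≤ 1)
    (hperp : ∀ δ > (0:ℝ), ∃ N₀ : ℕ, ∀ L R : ℕ, N₀ ≤ L → L ≤ R →
      1 - δ < liminf (fun N =>
        (μ ({a : G | ∀ n, L ≤ n → n ≤ R → |corrAvg μ F c n a| < δ} ∩ F N)).toReal
          / (μ (F N)).toReal) atTop)
    {Ω : Type*} [Group Ω] [TopologicalSpace Ω] [IsTopologicalGroup Ω]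
    [CompactSpace Ω] [SecondCountableTopology Ω] [MeasurableSpace Ω] [BorelSpace Ω]
    (P : Measure Ω) [P.IsHaarMeasure] [IsProbabilityMeasure P]
    (χ : G →* Ω) (hχ : Continuous χ)
    (φ : Ω → ℝ) (hφ : Continuous φ)
    (hae : ∀ᵐ ω ∂P,
      Tendsto (fun N => (μ (F N)).toReal⁻¹ * ∫ g in F N, c g * φ (χ g * ω) ∂μ)
        atTop (𝓝 0)) :
    ∀ ω : Ω,
      Tendsto (fun N => (μ (F N)).toReal⁻¹ * ∫ g in F N, c g * φ (χ g * ω) ∂μ)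
        atTop (𝓝 0) :=
  ae_to_everywhere_compact_group_general μ F c hcm hc1 P χ hχ φ hφ hae
end
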